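/- arXiv:math/0510226 — 5 statements merged into one kernel-verified Lean document; each statement's English description precedes it below -/
import Mathlib

section
/- Let 𝒜 be an associative algebra and X a tridiagonal (m+1)×(m+1) matrix over 𝒜 with diagonal entries a_m, a_{m-1}, …, a_0 (top-left to bottom-right), superdiagonal entries b_m, …, b_1, and subdiagonal entries c_m, …, c_1. For 1 ≤ k ≤ m+1 let I^{(k)} be the column-determinant of the lower-right k×k principal submatrix X_k. Then I^{(1)} = a_0, I^{(2)} = a_1 a_0 − c_1 b_1, and for 2 ≤ k ≤ m, I^{(k+1)} = a_k I^{(k)} − c_k b_k I^{(k-1)}. -/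
/-!
Every product in the column-determinant begins with an entry of the first column, so
Laplace expansion along that column holds over any ring. In the tridiagonal matrix the first
column carries only `a_k` and `c_k`; the minor of `c_k` has first row `(b_k, 0, …, 0)`, and
expanding it once more contributes `b_k I^{(k-1)}`, placed to the right of `c_k`.
-/

/-- Column-determinant of a matrix over a (possibly noncommutative) ring:
det(A) = Σ_σ sgn(σ) A_{σ(1),1} A_{σ(2),2} ⋯ A_{σ(n),n}. -/
noncomputable def cdet {𝒜 : Type*} [Ring 𝒜] {n : ℕ} (A : Matrix (Fin n) (Fin n) 𝒜) : 𝒜 :=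
  ∑ σ : Equiv.Perm (Fin n),
    (Equiv.Perm.sign σ : ℤ) • (List.ofFn (fun j => A (σ j) j)).prod

/-- The tridiagonal (m+1)×(m+1) matrix with diagonal entries a_m,…,a_0 (top-left to
bottom-right), superdiagonal entries b_m,…,b_1, and subdiagonal entries c_m,…,c_1. -/
def trid {𝒜 : Type*} [Ring 𝒜] (m : ℕ) (a b c : ℕ → 𝒜) :
    Matrix (Fin (m+1)) (Fin (m+1)) 𝒜 :=
  fun i j =>
    if (i : ℕ) = (j : ℕ) then a (m - (i : ℕ))
    else if (i : ℕ) + 1 = (j : ℕ) then b (m - (i : ℕ))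
    else if (j : ℕ) + 1 = (i : ℕ) then c (m - (j : ℕ))
    else 0

/-- The column-determinant `I^{(k)}` of the lower-right k×k principal submatrix of the
tridiagonal matrix `trid m a b c`. -/
noncomputable def lowerRightMinor {𝒜 : Type*} [Ring 𝒜] (m : ℕ) (a b c : ℕ → 𝒜)
    (k : ℕ) (hk : k ≤ m + 1) : 𝒜 :=
  cdet ((trid m a b c).submatrix
    (fun i : Fin k => (⟨m + 1 - k + (i : ℕ), by omega⟩ : Fin (m+1)))
    (fun i : Fin k => (⟨m + 1 - k + (i : ℕ), by omega⟩ : Fin (m+1))))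

section ColumnDeterminant

variable {𝒜 : Type*} [Ring 𝒜]

/-- The `p`-th minor keeps row `0` in the slot of row `p`, so its sign is `-1` rather than
`(-1)^p`. -/
theorem cdet_succ_column_zero {n : ℕ} (A : Matrix (Fin (n + 1)) (Fin (n + 1)) 𝒜) :
    cdet A = ∑ p : Fin (n + 1), (if p = 0 then 1 else -1 : ℤ) •
      (A p 0 * cdet (A.submatrix (fun i => Equiv.swap 0 p i.succ) Fin.succ)) := by
  rw [cdet, ← Equiv.sum_comp Equiv.Perm.decomposeFin.symm, Fintype.sum_prod_type]
  refine Finset.sum_congr rfl fun p _ => ?_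
  rw [cdet, Finset.mul_sum, Finset.smul_sum]
  refine Finset.sum_congr rfl fun τ _ => ?_
  rw [Equiv.Perm.decomposeFin.symm_sign, List.ofFn_succ]
  simp only [List.prod_cons, Equiv.Perm.decomposeFin_symm_apply_zero,
    Equiv.Perm.decomposeFin_symm_apply_succ, Matrix.submatrix_apply, Units.val_mul,
    Units.val_one, Units.val_neg, apply_ite (fun u : ℤˣ => (u : ℤ))]
  rw [mul_smul, mul_smul_comm]

theorem cdet_eq_zero_of_row_eq_zero {n : ℕ} (A : Matrix (Fin n) (Fin n) 𝒜) (i : Fin n)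
    (h : ∀ j, A i j = 0) : cdet A = 0 := by
  refine Finset.sum_eq_zero fun σ _ => ?_
  rw [List.prod_eq_zero (List.mem_ofFn.mpr ⟨σ⁻¹ i, by simp [h]⟩), smul_zero]

theorem cdet_fin_one (A : Matrix (Fin 1) (Fin 1) 𝒜) : cdet A = A 0 0 := by
  rw [cdet, Fintype.sum_unique]
  simp

theorem cdet_succ_of_row_zero {n : ℕ} (A : Matrix (Fin (n + 1)) (Fin (n + 1)) 𝒜)
    (h : ∀ j : Fin n, A 0 j.succ = 0) :
    cdet A = A 0 0 * cdet (A.submatrix Fin.succ Fin.succ) := by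
  have minor_eq_zero (p : Fin n) :
      cdet (A.submatrix (fun i => Equiv.swap 0 p.succ i.succ) Fin.succ) = 0 :=
    cdet_eq_zero_of_row_eq_zero _ p fun j => by simpa using h j
  simp [cdet_succ_column_zero, Fin.sum_univ_succ, minor_eq_zero]

theorem cdet_succ_succ_of_col_zero {n : ℕ} (A : Matrix (Fin (n + 2)) (Fin (n + 2)) 𝒜)
    (h : ∀ p : Fin n, A p.succ.succ 0 = 0) :
    cdet A = A 0 0 * cdet (A.submatrix Fin.succ Fin.succ) -
      A 1 0 * cdet (A.submatrix (fun i => Equiv.swap 0 1 i.succ) Fin.succ) := by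
  simp [cdet_succ_column_zero, Fin.sum_univ_succ, h, sub_eq_add_neg]

end ColumnDeterminant

section Tridiagonal

variable {𝒜 : Type*} [Ring 𝒜] (a b c : ℕ → 𝒜)

theorem trid_submatrix_succ_succ (k : ℕ) :
    (trid (k + 1) a b c).submatrix Fin.succ Fin.succ = trid k a b c := by
  ext i j
  simp only [Matrix.submatrix_apply, trid, Fin.val_succ, Nat.add_right_cancel_iff,
    Nat.add_sub_add_right]

theorem trid_submatrix_lowerRight {m : ℕ} (k : ℕ) (hk : k ≤ m) :
    (trid m a b c).submatrix (fun i : Fin (k + 1) => (⟨m - k + i, by omega⟩ : Fin (m + 1)))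
      (fun i : Fin (k + 1) => (⟨m - k + i, by omega⟩ : Fin (m + 1))) = trid k a b c := by
  ext i j
  have hi := i.isLt
  have hj := j.isLt
  simp only [Matrix.submatrix_apply, trid]
  split_ifs <;> first | omega | congr 1 <;> omega

theorem cdet_trid_zero : cdet (trid 0 a b c) = a 0 := by
  simp [cdet_fin_one, trid]

theorem cdet_trid_one : cdet (trid 1 a b c) = a 1 * a 0 - c 1 * b 1 := by
  rw [cdet_succ_succ_of_col_zero _ finZeroElim]
  simp [cdet_fin_one, trid]

theorem cdet_trid_add_two (k : ℕ) :
    cdet (trid (k + 2) a b c) =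
      a (k + 2) * cdet (trid (k + 1) a b c) - c (k + 2) * b (k + 2) * cdet (trid k a b c) := by
  have swap_apply_succ_succ (i : Fin (k + 1)) :
      Equiv.swap (0 : Fin (k + 3)) 1 i.succ.succ = i.succ.succ :=
    Equiv.swap_apply_of_ne_of_ne (Fin.succ_ne_zero _) (Fin.succ_succ_ne_one _)
  set A := trid (k + 2) a b c
  set N := A.submatrix (fun i : Fin (k + 2) => Equiv.swap 0 1 i.succ) Fin.succ
  have cdet_N : cdet N = b (k + 2) * cdet (trid k a b c) := by
    have N_minor : N.submatrix Fin.succ Fin.succ = trid k a b c := by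
      simp only [N, Matrix.submatrix_submatrix, Function.comp_def, swap_apply_succ_succ]
      rw [← trid_submatrix_succ_succ, ← trid_submatrix_succ_succ (k := k + 1),
        Matrix.submatrix_submatrix]
      rfl
    rw [cdet_succ_of_row_zero N fun j => by simp [N, A, trid], N_minor]
    simp [N, A, trid]
  rw [cdet_succ_succ_of_col_zero A fun p => by simp [A, trid, -Fin.val_eq_zero_iff], cdet_N,
    trid_submatrix_succ_succ, mul_assoc (c _)]
  simp [A, trid]

theorem lowerRightMinor_succ {m : ℕ} (k : ℕ) (hk : k + 1 ≤ m + 1) :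
    lowerRightMinor m a b c (k + 1) hk = cdet (trid k a b c) := by
  rw [lowerRightMinor, ← trid_submatrix_lowerRight a b c (m := m) k (by omega)]
  simp only [Nat.add_sub_add_right]

end Tridiagonal

/-- Recursion for the principal minors of a noncommutative tridiagonal matrix:
I^{(1)} = a_0, I^{(2)} = a_1 a_0 − c_1 b_1, and
I^{(k+1)} = a_k I^{(k)} − c_k b_k I^{(k-1)} for 2 ≤ k ≤ m. -/
theorem stmt4 {𝒜 : Type*} [Ring 𝒜] (m : ℕ) (a b c : ℕ → 𝒜) (hm : 1 ≤ m) :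
    lowerRightMinor m a b c 1 (by omega) = a 0 ∧
    lowerRightMinor m a b c 2 (by omega) = a 1 * a 0 - c 1 * b 1 ∧
    ∀ (k : ℕ) (h2 : 2 ≤ k) (hk : k ≤ m),
      lowerRightMinor m a b c (k+1) (by omega) =
        a k * lowerRightMinor m a b c k (by omega) -
          c k * b k * lowerRightMinor m a b c (k-1) (by omega) := by
  refine ⟨by rw [lowerRightMinor_succ, cdet_trid_zero],
    by rw [lowerRightMinor_succ, cdet_trid_one], fun k h2 _ => ?_⟩
  obtain ⟨k, rfl⟩ : ∃ j, k = j + 2 := ⟨k - 2, by omega⟩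
  simp only [lowerRightMinor_succ, show k + 2 - 1 = k + 1 from rfl, cdet_trid_add_two]
end

section
/- The unital subalgebra of U(gl_2(ℂ)) generated by the three elements E_{11}, E_{22}, and E_{12}E_{21} is commutative. -/
/-!
Bracketing with `E_{kk}` multiplies `E_{ij}` by `δ_{ki} - δ_{kj}`, so `E_{ij}` and `E_{ji}` have
opposite weights and their product `E_{12}E_{21}` has weight `0`, i.e. commutes with `E_{11}` and
`E_{22}`; these two commute with each other for the same reason. Pairwise commuting generators
generate a commutative subalgebra.
-/

attribute [local instance 100] LieRing.ofAssociativeRing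

/-- `E i j` is the image in `U(gl_2(ℂ))` of the matrix unit `E_{ij}`. -/
noncomputable def E (i j : Fin 2) :
    UniversalEnvelopingAlgebra ℂ (Matrix (Fin 2) (Fin 2) ℂ) :=
  UniversalEnvelopingAlgebra.ι ℂ (Matrix.single i j 1)

theorem Algebra.commute_of_mem_adjoin_of_forall_commute {R A : Type*} [CommSemiring R]
    [Semiring A] [Algebra R A] {s : Set A} (hs : ∀ a ∈ s, ∀ b ∈ s, Commute a b) {x y : A}
    (hx : x ∈ Algebra.adjoin R s) (hy : y ∈ Algebra.adjoin R s) : Commute x y :=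
  Algebra.commute_of_mem_adjoin_of_forall_mem_commute hy fun b hb =>
    (Algebra.commute_of_mem_adjoin_of_forall_mem_commute hx fun a ha => hs b hb a ha).symm

theorem lie_mul_eq_add_smul_of_lie_eq_smul {R A : Type*} [CommRing R] [Ring A] [Algebra R A]
    {a b c : A} {r s : R} (hb : ⁅a, b⁆ = r • b) (hc : ⁅a, c⁆ = s • c) :
    ⁅a, b * c⁆ = (r + s) • (b * c) := by
  rw [Ring.lie_def] at hb hc ⊢
  calc a * (b * c) - b * c * a = (a * b - b * a) * c + b * (a * c - c * a) := by noncomm_ring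
    _ = (r + s) • (b * c) := by rw [hb, hc, smul_mul_assoc, mul_smul_comm, add_smul]

theorem Matrix.lie_single_diag_single {n R : Type*} [Fintype n] [DecidableEq n] [CommRing R]
    (k i j : n) :
    ⁅(single k k 1 : Matrix n n R), (single i j 1 : Matrix n n R)⁆ =
      ((if k = i then 1 else 0) - (if k = j then 1 else 0) : R) •
        (single i j 1 : Matrix n n R) := by
  rw [LieRing.of_associative_ring_bracket]
  rcases eq_or_ne k i with rfl | hki <;> rcases eq_or_ne k j with rfl | hkj <;>
    simp [single_mul_single_same, single_mul_single_of_ne, Ne.symm, *]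

theorem lie_E_diag_E (k i j : Fin 2) :
    ⁅E k k, E i j⁆ = ((if k = i then 1 else 0) - (if k = j then 1 else 0) : ℂ) • E i j := by
  simp only [E]
  rw [← LieHom.map_lie, Matrix.lie_single_diag_single, map_smul]

theorem commute_E_diag_E_diag (k i : Fin 2) : Commute (E k k) (E i i) := by
  rw [commute_iff_lie_eq, lie_E_diag_E, sub_self, zero_smul]

theorem commute_E_diag_E_mul_E (k i j : Fin 2) : Commute (E k k) (E i j * E j i) := by
  rw [commute_iff_lie_eq, lie_mul_eq_add_smul_of_lie_eq_smul (lie_E_diag_E k i j)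
    (lie_E_diag_E k j i), sub_add_sub_cancel, sub_self, zero_smul]

/-- The unital subalgebra of U(gl_2(ℂ)) generated by E_{11}, E_{22} and E_{12}E_{21}
is commutative. -/
theorem stmt6 :
    ∀ x ∈ Algebra.adjoin ℂ ({E 0 0, E 1 1, E 0 1 * E 1 0} :
      Set (UniversalEnvelopingAlgebra ℂ (Matrix (Fin 2) (Fin 2) ℂ))),
    ∀ y ∈ Algebra.adjoin ℂ ({E 0 0, E 1 1, E 0 1 * E 1 0} :
      Set (UniversalEnvelopingAlgebra ℂ (Matrix (Fin 2) (Fin 2) ℂ))),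
      x * y = y * x := by
  have generators_commute : ∀ a ∈ ({E 0 0, E 1 1, E 0 1 * E 1 0} :
      Set (UniversalEnvelopingAlgebra ℂ (Matrix (Fin 2) (Fin 2) ℂ))),
      ∀ b ∈ ({E 0 0, E 1 1, E 0 1 * E 1 0} :
      Set (UniversalEnvelopingAlgebra ℂ (Matrix (Fin 2) (Fin 2) ℂ))), Commute a b := by
    rintro a (rfl | rfl | rfl) b (rfl | rfl | rfl)
    all_goals first
      | exact commute_E_diag_E_diag _ _
      | exact commute_E_diag_E_mul_E _ _ _
      | exact (commute_E_diag_E_mul_E _ _ _).symm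
      | exact Commute.refl _
  intro x hx y hy
  exact (Algebra.commute_of_mem_adjoin_of_forall_commute generators_commute hx hy).eq
end

section
/- Let R be a commutative ring and s, a ∈ R with s(s−1) = a. For m ≥ 0, let A'_m be the (m+1)×(m+1) tridiagonal matrix with diagonal entries 0, −1, −2, …, −m (top-left to bottom-right), superdiagonal entries m s, (m−1)s, …, s, and subdiagonal entries 1·(s−1), 2·(s−1), …, m·(s−1). Then det A'_m = Π_{k=0}^{m} ((m−2k)s − m + k). -/
/-!
In the basis `1, t, …, tᵐ`, the transpose of `A'_m` is the matrix of the operator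
`T p = (σ - 1 - t - σ t²) p' + m σ t p` on polynomials of degree `≤ m`: the dehomogenisation
`t = x / y` of the derivation `((σ - 1) y - x) ∂ₓ + σ x ∂_y` on binary forms of degree `m`.
`T` obeys a Leibniz rule, and `t + 1`, `σ t + 1 - σ` are eigenvectors of the degree-one operator
with eigenvalues `σ - 1` and `-σ`, so `(t + 1)ᵐ⁻ᵏ (σ t + 1 - σ)ᵏ` is an eigenvector of `T` with
eigenvalue `(m - 2k) σ - m + k`. Over `ℤ[σ]` these `m + 1` eigenvalues are distinct, so the
determinant is their product; specialising `σ ↦ s` gives the identity over any commutative ring.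
-/

open Matrix

theorem Matrix.det_eq_prod_of_mulVec_eq_smul {n F : Type*} [Fintype n] [DecidableEq n]
    [CommRing F] [IsDomain F] (M : Matrix n n F) (μ : n → F) (hμ : Function.Injective μ)
    (v : n → n → F) (hv : ∀ k, v k ≠ 0) (hMv : ∀ k, M *ᵥ v k = μ k • v k) :
    M.det = ∏ k, μ k := by
  have hindep : LinearIndependent F v :=
    Module.End.eigenvectors_linearIndependent' (toLin' M) μ hμ v fun k =>
      Module.End.hasEigenvector_iff.2 ⟨Module.End.mem_eigenspace_iff.2 (hMv k), hv k⟩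
  have hdet : (of v).det ≠ 0 := by
    rw [Ne, ← exists_vecMul_eq_zero_iff]
    rintro ⟨c, hc, hcv⟩
    rw [vecMul_eq_sum] at hcv
    exact hc (funext (Fintype.linearIndependent_iff.1 hindep c hcv))
  have hdiag : M * (of v)ᵀ = (of v)ᵀ * diagonal μ := by
    ext r k
    have hrk := congrFun (hMv k) r
    rw [mulVec, dotProduct, Pi.smul_apply, smul_eq_mul] at hrk
    rw [mul_diagonal, mul_apply]
    simpa [mul_comm] using hrk
  apply mul_right_cancel₀ hdet
  rw [← det_transpose (of v), ← det_mul, hdiag, det_mul, det_diagonal, mul_comm]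

namespace Polynomial

variable {F : Type*} [CommRing F]

noncomputable def coeffMatrix (T : F[X] →ₗ[F] F[X]) (m : ℕ) :
    Matrix (Fin (m + 1)) (Fin (m + 1)) F :=
  of fun r j => (T (X ^ (j : ℕ))).coeff r

def coeffVec (m : ℕ) (p : F[X]) : Fin (m + 1) → F :=
  fun r => p.coeff r

theorem coeffMatrix_mulVec_coeffVec (T : F[X] →ₗ[F] F[X]) {m : ℕ} {p : F[X]}
    (hp : p.natDegree ≤ m) : coeffMatrix T m *ᵥ coeffVec m p = coeffVec m (T p) := by
  ext r
  conv_rhs => rw [p.as_sum_range_C_mul_X_pow' (Nat.lt_succ_of_le hp)]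
  simp only [coeffMatrix, coeffVec, mulVec, dotProduct, of_apply, map_sum, finsetSum_coeff,
    C_mul', map_smul, coeff_smul, smul_eq_mul]
  rw [← Fin.sum_univ_eq_sum_range (fun j => p.coeff j * (T (X ^ j)).coeff r)]
  exact Finset.sum_congr rfl fun j _ => mul_comm _ _

theorem coeffVec_ne_zero {m : ℕ} {p : F[X]} (hp0 : p ≠ 0) (hp : p.natDegree ≤ m) :
    coeffVec m p ≠ 0 := fun h =>
  hp0 (leadingCoeff_eq_zero.1 (congrFun h ⟨p.natDegree, Nat.lt_succ_of_le hp⟩))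

theorem det_coeffMatrix_eq_prod [IsDomain F] (T : F[X] →ₗ[F] F[X]) (m : ℕ)
    (μ : Fin (m + 1) → F) (hμ : Function.Injective μ) (q : Fin (m + 1) → F[X])
    (hq0 : ∀ k, q k ≠ 0) (hq : ∀ k, (q k).natDegree ≤ m) (hTq : ∀ k, T (q k) = μ k • q k) :
    (coeffMatrix T m).det = ∏ k, μ k :=
  (coeffMatrix T m).det_eq_prod_of_mulVec_eq_smul μ hμ (fun k => coeffVec m (q k))
    (fun k => coeffVec_ne_zero (hq0 k) (hq k)) fun k => by
      rw [coeffMatrix_mulVec_coeffVec T (hq k), hTq]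
      rfl

noncomputable def sylvesterOp (σ : F) (n : ℕ) : F[X] →ₗ[F] F[X] :=
  LinearMap.mulLeft F (C (σ - 1) - X - C σ * X ^ 2) ∘ₗ derivative +
    LinearMap.mulLeft F (C (σ * n) * X)

@[simp]
theorem sylvesterOp_apply (σ : F) (n : ℕ) (p : F[X]) :
    sylvesterOp σ n p = (C (σ - 1) - X - C σ * X ^ 2) * derivative p + C (σ * n) * X * p :=
  rfl

theorem sylvesterOp_mul (σ : F) (a b : ℕ) (f g : F[X]) :
    sylvesterOp σ (a + b) (f * g) = sylvesterOp σ a f * g + f * sylvesterOp σ b g := by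
  simp only [sylvesterOp_apply, derivative_mul, Nat.cast_add, mul_add, C_add]
  ring

theorem sylvesterOp_pow (σ c : F) {f : F[X]} (hf : sylvesterOp σ 1 f = C c * f) (k : ℕ) :
    sylvesterOp σ k (f ^ k) = C (k * c) * f ^ k := by
  induction k with
  | zero => simp
  | succ k ih =>
    rw [pow_succ, sylvesterOp_mul, ih, hf, Nat.cast_succ, add_mul, one_mul, C_add]
    ring

theorem sylvesterOp_X_add_one (σ : F) :
    sylvesterOp σ 1 (X + 1) = C (σ - 1) * (X + 1) := by
  simp only [sylvesterOp_apply, derivative_add, derivative_X, derivative_one, Nat.cast_one,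
    mul_one, map_sub, map_one]
  ring

theorem sylvesterOp_C_mul_X_add_C (σ : F) :
    sylvesterOp σ 1 (C σ * X + C (1 - σ)) = C (-σ) * (C σ * X + C (1 - σ)) := by
  simp only [sylvesterOp_apply, derivative_add, derivative_C_mul_X, derivative_C, add_zero,
    Nat.cast_one, mul_one]
  simp only [map_sub, map_one, map_neg]
  ring

theorem sylvesterOp_eigenvector (σ : F) (i k : ℕ) :
    sylvesterOp σ (i + k) ((X + 1) ^ i * (C σ * X + C (1 - σ)) ^ k) =
      C (i * (σ - 1) - k * σ) * ((X + 1) ^ i * (C σ * X + C (1 - σ)) ^ k) := by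
  rw [sylvesterOp_mul, sylvesterOp_pow σ _ (sylvesterOp_X_add_one σ),
    sylvesterOp_pow σ _ (sylvesterOp_C_mul_X_add_C σ)]
  simp only [map_sub, map_mul, map_neg]
  ring

theorem coeff_sylvesterOp_X_pow (σ : F) (n i j : ℕ) :
    (sylvesterOp σ n (X ^ i)).coeff j =
      if i = j then -(i : F)
      else if i + 1 = j then ((n : F) - i) * σ
      else if j + 1 = i then ((j : F) + 1) * (σ - 1)
      else 0 := by
  have hX : sylvesterOp σ n (X ^ i) = C ((i : F) * (σ - 1)) * X ^ (i - 1) - C (i : F) * X ^ i +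
      C (((n : F) - i) * σ) * X ^ (i + 1) := by
    rcases i with _ | k
    · simp only [pow_zero, sylvesterOp_apply, derivative_one, Nat.cast_zero, map_sub, map_mul,
        map_natCast, map_zero, map_one, zero_mul, mul_zero, zero_add, zero_tsub, sub_self,
        sub_zero, mul_one, pow_one]
      ring
    · simp only [sylvesterOp_apply, derivative_X_pow, Nat.add_sub_cancel, map_mul, map_sub]
      ring
  rw [hX, coeff_add, coeff_sub, coeff_C_mul_X_pow, coeff_C_mul_X_pow, coeff_C_mul_X_pow]
  split_ifs <;> first
    | omega
    | ring1
    | (obtain rfl : i = j + 1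
       · omega
       push_cast
       ring1)
    | (obtain rfl : i = 0
       · omega
       simp)

theorem det_coeffMatrix_sylvesterOp [IsDomain F] (σ : F) (m : ℕ)
    (hμ : Function.Injective fun k : Fin (m + 1) => ((m : F) - 2 * k) * σ - m + k) :
    (coeffMatrix (sylvesterOp σ m) m).det =
      ∏ k : Fin (m + 1), (((m : F) - 2 * k) * σ - m + k) := by
  refine det_coeffMatrix_eq_prod _ m _ hμ
    (fun k => (X + 1) ^ (m - k : ℕ) * (C σ * X + C (1 - σ)) ^ (k : ℕ)) (fun k => ?_) (fun k => ?_)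
    (fun k => ?_)
  · refine mul_ne_zero (pow_ne_zero _ fun h => ?_) (pow_ne_zero _ fun h => ?_)
    · simpa using congrArg (eval 0) h
    · simpa using congrArg (eval 1) h
  · compute_degree
    omega
  · have hk : (k : ℕ) ≤ m := k.is_le
    have := sylvesterOp_eigenvector σ (m - k) k
    rw [Nat.sub_add_cancel hk] at this
    rw [this, Nat.cast_sub hk, smul_eq_C_mul]
    congr 2
    ring

theorem det_coeffMatrix_sylvesterOp_X (m : ℕ) :
    (coeffMatrix (sylvesterOp (X : ℤ[X]) m) m).det =
      ∏ k ∈ Finset.range (m + 1),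
        (((m : ℤ[X]) - 2 * (k : ℤ[X])) * X - (m : ℤ[X]) + (k : ℤ[X])) := by
  rw [det_coeffMatrix_sylvesterOp, Fin.prod_univ_eq_prod_range
    (fun k : ℕ => (((m : ℤ[X]) - 2 * (k : ℤ[X])) * X - (m : ℤ[X]) + (k : ℤ[X])))]
  intro k l hkl
  have h2X : (2 * X - 1 : ℤ[X]) ≠ 0 := fun h => by simpa using congrArg (eval 0) h
  have : (((l : ℕ) : ℤ[X]) - ((k : ℕ) : ℤ[X])) * (2 * X - 1) = 0 := by
    simp only at hkl
    linear_combination hkl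
  rcases mul_eq_zero.1 this with h | h
  · exact Fin.ext (by exact_mod_cast (sub_eq_zero.1 h).symm)
  · exact absurd h h2X

end Polynomial

open Polynomial

theorem stmt9_general {R : Type*} [CommRing R] (s : R) (m : ℕ)
    (A : Matrix (Fin (m+1)) (Fin (m+1)) R)
    (hA : ∀ i j : Fin (m+1),
      A i j =
        if (i : ℕ) = (j : ℕ) then -((i : ℕ) : R)
        else if (i : ℕ) + 1 = (j : ℕ) then ((m : R) - (i : ℕ)) * s
        else if (j : ℕ) + 1 = (i : ℕ) then (((j : ℕ) : R) + 1) * (s - 1)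
        else 0) :
    A.det = ∏ k ∈ Finset.range (m+1),
      (((m : R) - 2 * (k : R)) * s - (m : R) + (k : R)) := by
  have hA' : A = ((aeval s).mapMatrix (coeffMatrix (sylvesterOp (X : ℤ[X]) m) m))ᵀ := by
    ext i j
    rw [hA]
    simp only [transpose_apply, AlgHom.mapMatrix_apply, map_apply, coeffMatrix, of_apply,
      coeff_sylvesterOp_X_pow]
    split_ifs <;> simp
  rw [hA', det_transpose, ← AlgHom.map_det, det_coeffMatrix_sylvesterOp_X, map_prod]
  simp [map_ofNat]

/-- Sylvester-type determinant: let A'_m be the (m+1)×(m+1) tridiagonal matrix with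
diagonal entries 0, −1, …, −m, superdiagonal entries m·s, (m−1)·s, …, s, and
subdiagonal entries 1·(s−1), …, m·(s−1), where s(s−1) = a. Then
det A'_m = Π_{k=0}^m ((m−2k)s − m + k). -/
theorem stmt9 {R : Type*} [CommRing R] (s a : R) (hs : s * (s - 1) = a) (m : ℕ)
    (A : Matrix (Fin (m+1)) (Fin (m+1)) R)
    (hA : ∀ i j : Fin (m+1),
      A i j =
        if (i : ℕ) = (j : ℕ) then -((i : ℕ) : R)
        else if (i : ℕ) + 1 = (j : ℕ) then ((m : R) - (i : ℕ)) * s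
        else if (j : ℕ) + 1 = (i : ℕ) then (((j : ℕ) : R) + 1) * (s - 1)
        else 0) :
    A.det = ∏ k ∈ Finset.range (m+1),
      (((m : R) - 2 * (k : R)) * s - (m : R) + (k : R)) :=
  stmt9_general s m A hA
end

section
/- Let R be a commutative ℚ-algebra and h, a ∈ R such that r ∈ R satisfies r^2 = (h−1)^2 + 4a. For m ≥ 0, let A_m be the (m+1)×(m+1) tridiagonal matrix with diagonal entries 0, −(h−1), −2(h−1), …, −m(h−1), superdiagonal entries m a, (m−1)a, …, a, and subdiagonal entries 1, 2, …, m. Then det A_m = Π_{k=0}^{m} ( −m(h−1)/2 + ((m−2k)/2) r ). -/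
/-!
With `α, β = (±r - (h - 1)) / 2` we have `h - 1 = -(α + β)` and `a = -αβ`, so `A_m` is a
two-parameter Sylvester–Kac matrix `B(α, β)`. Its transpose is the matrix, on polynomials of degree
at most `m`, of the operator `p ↦ (1 + αX)(1 + βX) p' - mαβ X p`, which has the eigenvectors
`(1 + αX)^(m-k) (1 + βX)^k` with eigenvalues `(m - k)α + kβ`. For indeterminates `α, β` the matrix
of these eigenvectors has nonzero determinant (at `α = 0, β = 1` it is the unitriangular Pascal
matrix), so `det B` is the product of the eigenvalues; the general case follows by specialisation.
-/
open Polynomial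

namespace SylvesterKac

variable {T : Type*} [CommRing T]

/-- For `x = 1`, `y = -1` this gives the classical Sylvester–Kac matrix. -/
def kacEntry (x y : T) (m i j : ℕ) : T :=
  if i = j then (i : T) * (x + y)
  else if i + 1 = j then -(((m : T) - i) * (x * y))
  else if j + 1 = i then (j : T) + 1
  else 0

def kacMatrix (x y : T) (m : ℕ) : Matrix (Fin (m + 1)) (Fin (m + 1)) T :=
  Matrix.of fun i j => kacEntry x y m i j

noncomputable def kacOp (x y : T) (m : ℕ) : T[X] →ₗ[T] T[X] where
  toFun p := (1 + C x * X) * (1 + C y * X) * derivative p - C ((m : T) * (x * y)) * X * p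
  map_add' p q := by simp only [derivative_add]; ring
  map_smul' c p := by simp only [smul_eq_C_mul, derivative_C_mul, RingHom.id_apply]; ring

variable (x y : T) (m : ℕ)

theorem coeff_kacOp_X_pow (i j : ℕ) : (kacOp x y m (X ^ i)).coeff j = kacEntry x y m i j := by
  rcases i with _ | n
  · have hop : kacOp x y m (X ^ 0) = C (-((m : T) * (x * y))) * X ^ 1 := by
      simp [kacOp]
    rw [hop, coeff_C_mul_X_pow, kacEntry]
    split_ifs <;> first | omega | contradiction | (subst_vars; push_cast; ring)
  · have hop : kacOp x y m (X ^ (n + 1)) = C ((n : T) + 1) * X ^ n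
        + C (((n : T) + 1) * (x + y)) * X ^ (n + 1)
        + C (((n : T) + 1 - m) * (x * y)) * X ^ (n + 2) := by
      simp only [kacOp, LinearMap.coe_mk, AddHom.coe_mk, derivative_X_pow, C_mul, C_add, C_sub,
        Nat.cast_add, Nat.cast_one, C_1, add_tsub_cancel_right, map_natCast]
      ring
    simp only [hop, coeff_add, coeff_C_mul_X_pow, kacEntry]
    split_ifs <;> first | omega | contradiction | (subst_vars; push_cast; ring)

theorem sum_coeff_mul_kacMatrix {p : T[X]} (hp : p.natDegree ≤ m) (j : Fin (m + 1)) :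
    ∑ i : Fin (m + 1), p.coeff i * kacMatrix x y m i j = (kacOp x y m p).coeff j := by
  conv_rhs => rw [p.as_sum_range' (m + 1) (Nat.lt_succ_of_le hp)]
  simp only [map_sum, finsetSum_coeff, ← C_mul_X_pow_eq_monomial, ← smul_eq_C_mul,
    map_smul, coeff_smul, smul_eq_mul, coeff_kacOp_X_pow]
  exact Fin.sum_univ_eq_sum_range (fun i => p.coeff i * kacEntry x y m i j) (m + 1)

noncomputable def kacEigenpoly (a b : ℕ) : T[X] := (1 + C x * X) ^ a * (1 + C y * X) ^ b

noncomputable def kacEigenMatrix : Matrix (Fin (m + 1)) (Fin (m + 1)) T :=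
  Matrix.of fun k i => (kacEigenpoly x y (m - k) k).coeff i

theorem one_add_C_mul_X_mul_derivative_pow (a : ℕ) :
    (1 + C x * X) * derivative ((1 + C x * X) ^ a) = C (a * x) * (1 + C x * X) ^ a := by
  rcases a with _ | n
  · simp
  · simp only [derivative_pow, derivative_add, derivative_one, derivative_C_mul_X, C_mul,
      map_natCast, add_tsub_cancel_right]
    ring

theorem natDegree_kacEigenpoly_le (a b : ℕ) : (kacEigenpoly x y a b).natDegree ≤ a + b := by
  unfold kacEigenpoly
  compute_degree

theorem kacOp_kacEigenpoly {a b : ℕ} (hab : a + b = m) :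
    kacOp x y m (kacEigenpoly x y a b) = C (a * x + b * y) * kacEigenpoly x y a b := by
  have hx := one_add_C_mul_X_mul_derivative_pow x a
  have hy := one_add_C_mul_X_mul_derivative_pow y b
  subst hab
  simp only [kacOp, kacEigenpoly, LinearMap.coe_mk, AddHom.coe_mk, derivative_mul] at hx hy ⊢
  simp only [C_mul, C_add, map_natCast, Nat.cast_add] at hx hy ⊢
  linear_combination (1 + C y * X) * (1 + C y * X) ^ b * hx
    + (1 + C x * X) * (1 + C x * X) ^ a * hy

theorem kacEigenMatrix_mul_kacMatrix :
    kacEigenMatrix x y m * kacMatrix x y m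
      = Matrix.diagonal (fun k : Fin (m + 1) => ((m - k : ℕ) : T) * x + (k : ℕ) * y)
        * kacEigenMatrix x y m := by
  ext k j
  have hk : m - k + k = m := Nat.sub_add_cancel (Nat.le_of_lt_succ k.isLt)
  rw [Matrix.mul_apply, Matrix.diagonal_mul]
  simp only [kacEigenMatrix, Matrix.of_apply]
  rw [sum_coeff_mul_kacMatrix x y m ((natDegree_kacEigenpoly_le x y _ _).trans hk.le),
    kacOp_kacEigenpoly x y m hk, coeff_C_mul]

theorem kacMatrix_map {S : Type*} [CommRing S] (f : T →+* S) :
    (kacMatrix x y m).map f = kacMatrix (f x) (f y) m := by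
  ext i j
  simp [kacMatrix, kacEntry, apply_ite f]

theorem kacEigenMatrix_map {S : Type*} [CommRing S] (f : T →+* S) :
    (kacEigenMatrix x y m).map f = kacEigenMatrix (f x) (f y) m := by
  ext k i
  simp [kacEigenMatrix, kacEigenpoly, ← coeff_map]

theorem det_kacEigenMatrix_zero_one : (kacEigenMatrix (0 : T) 1 m).det = 1 := by
  have hchoose :
      kacEigenMatrix (0 : T) 1 m = Matrix.of fun k i : Fin (m + 1) => ((k : ℕ).choose i : T) := by
    ext k i
    simp [kacEigenMatrix, kacEigenpoly, coeff_one_add_X_pow]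
  rw [hchoose, Matrix.det_of_isLowerTriangular]
  · simp
  · intro k i hki
    simp [Nat.choose_eq_zero_of_lt (show (k : ℕ) < i from hki)]

open MvPolynomial in
theorem det_kacEigenMatrix_X_ne_zero :
    (kacEigenMatrix (X 0 : MvPolynomial (Fin 2) ℤ) (X 1) m).det ≠ 0 := by
  intro h
  have := congrArg (eval₂Hom (RingHom.id ℤ) ![0, 1]) h
  rw [RingHom.map_det, RingHom.mapMatrix_apply, kacEigenMatrix_map] at this
  simp [det_kacEigenMatrix_zero_one] at this

open MvPolynomial in
theorem det_kacMatrix_X :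
    (kacMatrix (X 0 : MvPolynomial (Fin 2) ℤ) (X 1) m).det
      = ∏ k : Fin (m + 1),
          (((m - k : ℕ) : MvPolynomial (Fin 2) ℤ) * X 0 + ((k : ℕ) : MvPolynomial (Fin 2) ℤ) * X 1) := by
  refine mul_left_cancel₀ (det_kacEigenMatrix_X_ne_zero m) ?_
  rw [← Matrix.det_mul, kacEigenMatrix_mul_kacMatrix, Matrix.det_mul, Matrix.det_diagonal,
    mul_comm]

theorem det_kacMatrix :
    (kacMatrix x y m).det = ∏ k ∈ Finset.range (m + 1), (((m - k : ℕ) : T) * x + k * y) := by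
  let φ := MvPolynomial.eval₂Hom (Int.castRingHom T) ![x, y]
  have hxy : kacMatrix x y m = (kacMatrix (MvPolynomial.X 0) (MvPolynomial.X 1) m).map φ := by
    rw [kacMatrix_map]
    simp [φ]
  rw [hxy, ← RingHom.mapMatrix_apply, ← RingHom.map_det, det_kacMatrix_X, map_prod,
    ← Fin.prod_univ_eq_prod_range]
  simp [φ]

end SylvesterKac

open SylvesterKac in
/-- Let R be a commutative ℚ-algebra and h, a, r ∈ R with r² = (h−1)² + 4a. Let A_m be
the (m+1)×(m+1) tridiagonal matrix with diagonal entries 0, −(h−1), …, −m(h−1),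
superdiagonal entries m·a, (m−1)·a, …, a, and subdiagonal entries 1, 2, …, m. Then
det A_m = Π_{k=0}^m ( −m(h−1)/2 + ((m−2k)/2)·r ). -/
theorem stmt10 {R : Type*} [CommRing R] [Algebra ℚ R] (h a r : R)
    (hr : r ^ 2 = (h - 1) ^ 2 + 4 * a) (m : ℕ)
    (A : Matrix (Fin (m+1)) (Fin (m+1)) R)
    (hA : ∀ i j : Fin (m+1),
      A i j =
        if (i : ℕ) = (j : ℕ) then -(((i : ℕ) : R) * (h - 1))
        else if (i : ℕ) + 1 = (j : ℕ) then ((m : R) - (i : ℕ)) * a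
        else if (j : ℕ) + 1 = (i : ℕ) then (((j : ℕ) : R) + 1)
        else 0) :
    A.det = ∏ k ∈ Finset.range (m+1),
      (-(((m : ℚ) / 2) • ((h - 1))) + (((m : ℚ) - 2 * (k : ℚ)) / 2) • r) := by
  set half : R := algebraMap ℚ R 2⁻¹
  have two_mul_half : 2 * half = 1 := by
    rw [← map_ofNat (algebraMap ℚ R) 2, ← map_mul]
    norm_num
  set α := half * (r - (h - 1))
  set β := -(half * (r + (h - 1)))
  have hA_kac : A = kacMatrix α β m := by
    ext i j
    rw [hA, kacMatrix, Matrix.of_apply, kacEntry]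
    split_ifs
    · linear_combination ((i : R) * (h - 1)) * two_mul_half
    · linear_combination (-((m : R) - i) * a * (1 + 2 * half)) * two_mul_half
        - ((m : R) - i) * half ^ 2 * hr
    · rfl
    · rfl
  rw [hA_kac, det_kacMatrix]
  refine Finset.prod_congr rfl fun k hk => ?_
  rw [Nat.cast_sub (Nat.le_of_lt_succ (Finset.mem_range.mp hk))]
  simp only [Algebra.smul_def, div_eq_mul_inv, map_mul, map_sub, map_natCast, map_ofNat]
  ring
end

section
/- Let λ = (λ_1 ≥ λ_2) be a dominant weight of gl_2, m = λ_1 − λ_2 ≥ 1. The shifted determinant D_λ(−u) and the characteristic polynomial P_λ(u) of the braided Casimir element have distinct Harish-Chandra images whenever m ≥ 2: χ(D_λ(u)) = Π_{k=0}^{m}(u + (λ_1−k)μ_1 + (λ_2+k)μ_2 − k), while χ(P_λ(u)) = Π_{k=0}^{m}(−u + (λ_1−k)μ_1 + (λ_2+k)μ_2 − k(m+1−k)); in particular, for m ≥ 2 the polynomials χ(D_λ(−u)) and χ(P_λ(u)) in ℂ[μ_1, μ_2, u] are not equal, while for m ≤ 1 they coincide. -/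
open MvPolynomial

/-- Comparison of the Harish-Chandra images of D_λ(−u) and P_λ(u) for gl_2,
as polynomials in ℂ[μ_1, μ_2, u] (variables X 0 = μ_1, X 1 = μ_2, X 2 = u):
χ(D_λ(−u)) = Π_{k=0}^m (−u + (λ_1−k)μ_1 + (λ_2+k)μ_2 − k) and
χ(P_λ(u)) = Π_{k=0}^m (−u + (λ_1−k)μ_1 + (λ_2+k)μ_2 − k(m+1−k)) are unequal when
m = λ_1 − λ_2 ≥ 2, and equal when m ≤ 1. -/
theorem stmt19 (lam1 lam2 : ℤ) (hlam : lam2 ≤ lam1) (m : ℕ) (hm : (m : ℤ) = lam1 - lam2) :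
    (2 ≤ m →
      (∏ k ∈ Finset.range (m+1),
        (-(X 2) + C ((lam1 - k : ℤ) : ℂ) * X 0 + C ((lam2 + k : ℤ) : ℂ) * X 1 -
          C ((k : ℂ)) : MvPolynomial (Fin 3) ℂ)) ≠
      (∏ k ∈ Finset.range (m+1),
        (-(X 2) + C ((lam1 - k : ℤ) : ℂ) * X 0 + C ((lam2 + k : ℤ) : ℂ) * X 1 -
          C (((k * (m + 1 - k) : ℕ) : ℂ)) : MvPolynomial (Fin 3) ℂ))) ∧
    (m ≤ 1 →
      (∏ k ∈ Finset.range (m+1),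
        (-(X 2) + C ((lam1 - k : ℤ) : ℂ) * X 0 + C ((lam2 + k : ℤ) : ℂ) * X 1 -
          C ((k : ℂ)) : MvPolynomial (Fin 3) ℂ)) =
      (∏ k ∈ Finset.range (m+1),
        (-(X 2) + C ((lam1 - k : ℤ) : ℂ) * X 0 + C ((lam2 + k : ℤ) : ℂ) * X 1 -
          C (((k * (m + 1 - k) : ℕ) : ℂ)) : MvPolynomial (Fin 3) ℂ))) := by
  constructor
  · intro h2 heq
    have h := congrArg (eval (![0, 0, -1] : Fin 3 → ℂ)) heq
    simp only [map_prod, map_sub, map_add, map_neg, map_mul, eval_X, eval_C,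
      Matrix.cons_val_zero, Matrix.cons_val_one, Matrix.head_cons,
      Matrix.cons_val_two, Matrix.tail_cons, mul_zero, add_zero, neg_neg] at h
    have hL : (∏ k ∈ Finset.range (m+1), ((1 : ℂ) - (k : ℂ))) = 0 := by
      apply Finset.prod_eq_zero (i := 1) (by simp; omega)
      norm_num
    have hR : (∏ k ∈ Finset.range (m+1), ((1 : ℂ) - ((k * (m + 1 - k) : ℕ) : ℂ))) ≠ 0 := by
      apply Finset.prod_ne_zero_iff.2
      intro k hk
      rw [sub_ne_zero]
      intro hc
      have : (k * (m + 1 - k) : ℕ) = 1 := by exact_mod_cast hc.symm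
      have h1 := Nat.eq_one_of_mul_eq_one_right this
      have h2' := Nat.eq_one_of_mul_eq_one_left this
      simp only [Finset.mem_range] at hk
      omega
    rw [hL] at h
    exact hR h.symm
  · intro h1
    apply Finset.prod_congr rfl
    intro k hk
    simp only [Finset.mem_range] at hk
    congr 1
    congr 1
    interval_cases m <;> interval_cases k <;> norm_num
end
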